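/- arXiv:1612.04972 — 3 statements merged into one kernel-verified Lean document; each statement's English description precedes it below -/
import Mathlib

section
/- For p = 2: the function f(t₁,t₂) = t₁^{n₁} t₂^{n₂} (n₂/n · t₁^{−2}·n₁ + n₁/n · t₂^{−2}·n₂)^{n/2} restricted to t₁²+t₂²=1, t₁,t₂>0 has a unique critical point at (t₁,t₂) = (√(n₂/n), √(n₁/n)). Consequently the Willmore torus S^{n₁}(√(n₂/n)) × S^{n₂}(√(n₁/n)) is the unique principal Willmore orbit for the SO(n₁+1)×SO(n₂+1) action on S^{n+1}(1). -/
/-!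
The function is positive, so its critical points are those of its logarithm. With
`a = b = n₁ n₂ / n` and exponent `n / 2`, the logarithmic partial derivatives are
`(n₁ t₁² - n₂ t₂²) / (t₁ (t₁² + t₂²))` and `-(n₁ t₁² - n₂ t₂²) / (t₂ (t₁² + t₂²))`
(the function is homogeneous of degree `0`), so `t` is critical iff `n₁ t₁² = n₂ t₂²`, and on
the unit circle this singles out `(√(n₂/n), √(n₁/n))`.
-/

open ContinuousLinearMap

/-- With `a = b = n₁ n₂ / n` and `p = n / 2` this is, up to a constant factor, the Willmore
functional of `S^{n₁}(t₁) × S^{n₂}(t₂) ⊂ S^{n+1}(1)`. -/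
noncomputable def orbitWillmore (n₁ n₂ : ℕ) (a b p : ℝ) (t : ℝ × ℝ) : ℝ :=
  t.1 ^ n₁ * t.2 ^ n₂ * (a * t.1 ^ (-2 : ℤ) + b * t.2 ^ (-2 : ℤ)) ^ p

theorem smul_fst_add_smul_snd_eq_zero_iff {R : Type*} [CommSemiring R] [TopologicalSpace R]
    [IsTopologicalSemiring R] {A B : R} :
    A • fst R R R + B • snd R R R = 0 ↔ A = 0 ∧ B = 0 := by
  refine ⟨fun h => ⟨?_, ?_⟩, fun ⟨hA, hB⟩ => by ext <;> simp [hA, hB]⟩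
  · simpa using congr($h (1, 0))
  · simpa using congr($h (0, 1))

section
variable {n₁ n₂ : ℕ} {a b p x y : ℝ}

theorem hasFDerivAt_orbitWillmore (hx : x ≠ 0) (hy : y ≠ 0)
    (hG : a * x ^ (-2 : ℤ) + b * y ^ (-2 : ℤ) ≠ 0) :
    HasFDerivAt (orbitWillmore n₁ n₂ a b p)
      (orbitWillmore n₁ n₂ a b p (x, y) •
        ((n₁ / x - 2 * p * a * x ^ (-3 : ℤ) / (a * x ^ (-2 : ℤ) + b * y ^ (-2 : ℤ))) • fst ℝ ℝ ℝ +
          (n₂ / y - 2 * p * b * y ^ (-3 : ℤ) / (a * x ^ (-2 : ℤ) + b * y ^ (-2 : ℤ))) • snd ℝ ℝ ℝ))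
      (x, y) := by
  have hx₁ := (hasDerivAt_zpow (-2) x (.inl hx)).comp_hasFDerivAt (x, y)
    (hasFDerivAt_fst (𝕜 := ℝ) (p := (x, y)))
  have hy₁ := (hasDerivAt_zpow (-2) y (.inl hy)).comp_hasFDerivAt (x, y)
    (hasFDerivAt_snd (𝕜 := ℝ) (p := (x, y)))
  have h : HasFDerivAt (orbitWillmore n₁ n₂ a b p) _ (x, y) :=
    ((hasFDerivAt_fst.pow n₁).mul (hasFDerivAt_snd.pow n₂)).mul
      (((hx₁.const_mul a).add (hy₁.const_mul b)).rpow_const (p := p) (.inl hG))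
  simp only [Function.comp_def, Pi.add_apply, Pi.mul_apply, Real.rpow_sub_one hG] at h
  refine h.congr_fderiv ?_
  refine ContinuousLinearMap.ext fun v => ?_
  have hpow : ∀ (n : ℕ) {z : ℝ}, z ≠ 0 → (n : ℝ) * z ^ (n - 1) = n / z * z ^ n := by
    rintro (_ | n) z hz
    · simp
    · rw [Nat.add_sub_cancel, pow_succ]; field_simp
  simp only [orbitWillmore, zpow_neg, zpow_ofNat, Int.cast_neg, Int.cast_ofNat, Int.reduceNeg,
    Int.reduceSub, neg_mul, neg_smul, smul_neg, smul_add, nsmul_eq_mul, hpow _ hx, hpow _ hy,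
    add_apply, neg_apply, smul_apply, coe_fst', coe_snd', smul_eq_mul]
  field_simp
  ring
end

theorem mul_sq_eq_mul_sq_iff_of_sq_add_sq_eq_one {m₁ m₂ x y : ℝ} (hm₁ : 0 ≤ m₁) (hm₂ : 0 ≤ m₂)
    (hm : 0 < m₁ + m₂) (hx : 0 ≤ x) (hy : 0 ≤ y) (h : x ^ 2 + y ^ 2 = 1) :
    m₁ * x ^ 2 = m₂ * y ^ 2 ↔ x = √(m₂ / (m₁ + m₂)) ∧ y = √(m₁ / (m₁ + m₂)) := by
  rw [eq_comm (a := x), Real.sqrt_eq_iff_eq_sq (by positivity) hx, div_eq_iff hm.ne',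
    eq_comm (a := y), Real.sqrt_eq_iff_eq_sq (by positivity) hy, div_eq_iff hm.ne']
  constructor
  · intro hc
    exact ⟨by linear_combination -m₂ * h - hc, by linear_combination -m₁ * h + hc⟩
  · rintro ⟨hx', hy'⟩
    linear_combination x ^ 2 * hy' - y ^ 2 * hx'

section
variable {n₁ n₂ : ℕ} {c x y : ℝ}

theorem fderiv_orbitWillmore_eq_zero_iff (hx : 0 < x) (hy : 0 < y) (hc : 0 < c) :
    fderiv ℝ (orbitWillmore n₁ n₂ c c ((n₁ + n₂ : ℝ) / 2)) (x, y) = 0 ↔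
      n₁ * x ^ 2 = n₂ * y ^ 2 := by
  have hG : 0 < c * x ^ (-2 : ℤ) + c * y ^ (-2 : ℤ) := by positivity
  have hF : orbitWillmore n₁ n₂ c c ((n₁ + n₂ : ℝ) / 2) (x, y) ≠ 0 := by
    unfold orbitWillmore; positivity
  rw [(hasFDerivAt_orbitWillmore hx.ne' hy.ne' hG.ne').fderiv, smul_eq_zero, or_iff_right hF,
    smul_fst_add_smul_snd_eq_zero_iff]
  have hr : 0 < x * (x ^ 2 + y ^ 2) := by positivity
  have hs : 0 < y * (x ^ 2 + y ^ 2) := by positivity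
  have hA : n₁ / x - 2 * ((n₁ + n₂ : ℝ) / 2) * c * x ^ (-3 : ℤ) /
      (c * x ^ (-2 : ℤ) + c * y ^ (-2 : ℤ)) = (n₁ * x ^ 2 - n₂ * y ^ 2) / (x * (x ^ 2 + y ^ 2)) := by
    field_simp
    ring
  have hB : n₂ / y - 2 * ((n₁ + n₂ : ℝ) / 2) * c * y ^ (-3 : ℤ) /
      (c * x ^ (-2 : ℤ) + c * y ^ (-2 : ℤ)) = -((n₁ * x ^ 2 - n₂ * y ^ 2) / (y * (x ^ 2 + y ^ 2))) := by
    field_simp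
    ring
  rw [hA, hB, neg_eq_zero, div_eq_zero_iff, div_eq_zero_iff, or_iff_left hr.ne',
    or_iff_left hs.ne', and_self, sub_eq_zero]
end

/-- For `p = 2`, the Willmore functional of the tori `S^{n₁}(t₁) × S^{n₂}(t₂) ⊂ S^{n+1}(1)`
restricted to `t₁² + t₂² = 1`, `t₁, t₂ > 0`, has the unique critical point
`(t₁, t₂) = (√(n₂/n), √(n₁/n))`: the Willmore torus is the unique principal Willmore
orbit. -/
theorem willmore_torus_unique_principal_orbit
    (n₁ n₂ : ℕ) (h₁ : 0 < n₁) (h₂ : 0 < n₂) (N : ℕ) (hN : N = n₁ + n₂) :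
    let f : ℝ × ℝ → ℝ := fun t =>
      t.1 ^ n₁ * t.2 ^ n₂ *
        ((n₂ : ℝ) / (N : ℝ) * t.1 ^ (-2 : ℤ) * (n₁ : ℝ) +
          (n₁ : ℝ) / (N : ℝ) * t.2 ^ (-2 : ℤ) * (n₂ : ℝ)) ^ ((N : ℝ) / 2)
    ∀ t : ℝ × ℝ, 0 < t.1 → 0 < t.2 → t.1 ^ 2 + t.2 ^ 2 = 1 →
      (fderiv ℝ f t = 0 ↔
        t = (Real.sqrt ((n₂ : ℝ) / (N : ℝ)), Real.sqrt ((n₁ : ℝ) / (N : ℝ)))) := by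
  rintro f ⟨x, y⟩ hx hy hcirc
  subst hN
  have hf : f = orbitWillmore n₁ n₂ (n₁ * n₂ / (n₁ + n₂)) (n₁ * n₂ / (n₁ + n₂))
      ((n₁ + n₂ : ℝ) / 2) := by
    funext t
    simp only [f, orbitWillmore, Nat.cast_add]
    ring_nf
  rw [hf, fderiv_orbitWillmore_eq_zero_iff hx hy (by positivity), Prod.mk.injEq, Nat.cast_add]
  exact mul_sq_eq_mul_sq_iff_of_sq_add_sq_eq_one (Nat.cast_nonneg _) (Nat.cast_nonneg _)
    (by positivity) hx.le hy.le hcirc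
end

section
/- Let A be a real symmetric m×m matrix and B its upper-left k×k principal submatrix (k ≤ m). Then min_{c∈ℝ} ‖B − c·I_k‖² ≤ min_{c∈ℝ} ‖A − c·I_m‖², where ‖·‖² denotes the sum of squares of all entries (Frobenius norm squared). -/
/-- Lemma 7.1: for a real symmetric `m×m` matrix `A` with leading principal `k×k`
submatrix `B`, `min_c ‖B − cI‖² ≤ min_c ‖A − cI‖²` (squared Frobenius norms). -/
theorem min_trace_free_norm_submatrix_le
    (m k : ℕ) (hk : 1 ≤ k) (hkm : k ≤ m)
    (A : Matrix (Fin m) (Fin m) ℝ) (hA : A.IsSymm) :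
    sInf (Set.range fun c : ℝ =>
        ∑ i, ∑ j, ((A.submatrix (Fin.castLE hkm) (Fin.castLE hkm)
          - c • (1 : Matrix (Fin k) (Fin k) ℝ)) i j) ^ 2) ≤
    sInf (Set.range fun c : ℝ =>
        ∑ i, ∑ j, ((A - c • (1 : Matrix (Fin m) (Fin m) ℝ)) i j) ^ 2) := by
  have hbdd : BddBelow (Set.range fun c : ℝ =>
      ∑ i, ∑ j, ((A.submatrix (Fin.castLE hkm) (Fin.castLE hkm)
        - c • (1 : Matrix (Fin k) (Fin k) ℝ)) i j) ^ 2) := by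
    refine ⟨0, ?_⟩
    rintro x ⟨c, rfl⟩
    positivity
  apply le_csInf (Set.range_nonempty _)
  rintro b ⟨c, rfl⟩
  refine le_trans (csInf_le hbdd ⟨c, rfl⟩) ?_
  -- pointwise inequality
  have key : ∀ i j : Fin k,
      ((A.submatrix (Fin.castLE hkm) (Fin.castLE hkm)
        - c • (1 : Matrix (Fin k) (Fin k) ℝ)) i j) ^ 2
      = ((A - c • (1 : Matrix (Fin m) (Fin m) ℝ)) (Fin.castLE hkm i) (Fin.castLE hkm j)) ^ 2 := by
    intro i j
    simp only [Matrix.sub_apply, Matrix.submatrix_apply, Matrix.smul_apply, Matrix.one_apply,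
      smul_eq_mul]
    congr 2
    simp [Fin.castLE_inj]
  have inner : ∀ i : Fin m,
      (∑ j : Fin k, ((A - c • (1 : Matrix (Fin m) (Fin m) ℝ)) i (Fin.castLE hkm j)) ^ 2)
      ≤ ∑ j : Fin m, ((A - c • (1 : Matrix (Fin m) (Fin m) ℝ)) i j) ^ 2 := by
    intro i
    rw [show (∑ j : Fin k, ((A - c • (1 : Matrix (Fin m) (Fin m) ℝ)) i (Fin.castLE hkm j)) ^ 2)
        = ∑ j ∈ Finset.univ.map (Fin.castLEEmb hkm),
            ((A - c • (1 : Matrix (Fin m) (Fin m) ℝ)) i j) ^ 2 by rw [Finset.sum_map]; rfl]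
    exact Finset.sum_le_sum_of_subset_of_nonneg (Finset.subset_univ _)
      (fun _ _ _ => by positivity)
  calc (∑ i : Fin k, ∑ j : Fin k, ((A.submatrix (Fin.castLE hkm) (Fin.castLE hkm)
          - c • (1 : Matrix (Fin k) (Fin k) ℝ)) i j) ^ 2)
      = ∑ i : Fin k, ∑ j : Fin k,
          ((A - c • (1 : Matrix (Fin m) (Fin m) ℝ)) (Fin.castLE hkm i) (Fin.castLE hkm j)) ^ 2 := by
        simp_rw [key]
    _ ≤ ∑ i : Fin k, ∑ j : Fin m,
          ((A - c • (1 : Matrix (Fin m) (Fin m) ℝ)) (Fin.castLE hkm i) j) ^ 2 :=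
        Finset.sum_le_sum fun i _ => inner _
    _ ≤ ∑ i : Fin m, ∑ j : Fin m, ((A - c • (1 : Matrix (Fin m) (Fin m) ℝ)) i j) ^ 2 := by
        rw [show (∑ i : Fin k, ∑ j : Fin m,
            ((A - c • (1 : Matrix (Fin m) (Fin m) ℝ)) (Fin.castLE hkm i) j) ^ 2)
          = ∑ i ∈ Finset.univ.map (Fin.castLEEmb hkm), ∑ j : Fin m,
              ((A - c • (1 : Matrix (Fin m) (Fin m) ℝ)) i j) ^ 2 by rw [Finset.sum_map]; rfl]
        exact Finset.sum_le_sum_of_subset_of_nonneg (Finset.subset_univ _)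
          (fun _ _ _ => by positivity)
end

section
/- Equivalently to the previous lemma: for a real symmetric m×m matrix A with upper-left k×k block B, ‖B − (tr B / k)·I_k‖² ≤ ‖A − (tr A / m)·I_m‖² (Frobenius norms). -/
private lemma expand_sum {n : ℕ} (M : Matrix (Fin n) (Fin n) ℝ) (c : ℝ) :
    ∑ i, ∑ j, ((M - c • (1 : Matrix (Fin n) (Fin n) ℝ)) i j) ^ 2 =
      ∑ i, ∑ j, (M i j) ^ 2 - 2 * c * M.trace + c ^ 2 * n := by
  have : ∀ i : Fin n, ∑ j, ((M - c • (1 : Matrix (Fin n) (Fin n) ℝ)) i j) ^ 2 =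
      ∑ j, (M i j) ^ 2 - 2 * c * M i i + c ^ 2 := by
    intro i
    have h1 : ∀ j, ((M - c • (1 : Matrix (Fin n) (Fin n) ℝ)) i j) ^ 2 =
        (M i j) ^ 2 - 2 * c * (M i j * (if i = j then (1:ℝ) else 0))
          + c ^ 2 * (if i = j then (1:ℝ) else 0) := by
      intro j
      simp [Matrix.sub_apply, Matrix.smul_apply, Matrix.one_apply]
      by_cases h : i = j <;> simp [h] <;> ring
    rw [Finset.sum_congr rfl (fun j _ => h1 j)]
    rw [Finset.sum_add_distrib, Finset.sum_sub_distrib]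
    simp [← Finset.mul_sum, Finset.sum_ite_eq, Matrix.one_apply]
  rw [Finset.sum_congr rfl (fun i _ => this i)]
  rw [Finset.sum_add_distrib, Finset.sum_sub_distrib]
  simp only [Matrix.trace, Matrix.diag, Finset.sum_const, Finset.card_univ, Fintype.card_fin, nsmul_eq_mul, ← Finset.mul_sum, ← Finset.sum_mul]
  ring

private lemma min_at_mean {n : ℕ} (hn : 1 ≤ n) (M : Matrix (Fin n) (Fin n) ℝ) (c : ℝ) :
    ∑ i, ∑ j, ((M - (M.trace / (n : ℝ)) • (1 : Matrix (Fin n) (Fin n) ℝ)) i j) ^ 2 ≤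
      ∑ i, ∑ j, ((M - c • (1 : Matrix (Fin n) (Fin n) ℝ)) i j) ^ 2 := by
  rw [expand_sum, expand_sum]
  have hn' : (0:ℝ) < n := by exact_mod_cast hn
  set S := M.trace
  have hb : S / n * n = S := div_mul_cancel₀ S hn'.ne'
  nlinarith [sq_nonneg (c - S / n), sq_nonneg (c * n - S), mul_pos hn' hn']

private lemma sum_castLE_le {m k : ℕ} (hkm : k ≤ m) (g : Fin m → ℝ) (hg : ∀ i, 0 ≤ g i) :
    ∑ i : Fin k, g (Fin.castLE hkm i) ≤ ∑ i, g i := by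
  have h : ∑ i : Fin k, g (Fin.castLE hkm i)
      = ∑ i ∈ Finset.univ.map (Fin.castLEEmb hkm), g i := by
    rw [Finset.sum_map]; rfl
  rw [h]
  exact Finset.sum_le_sum_of_subset_of_nonneg (Finset.subset_univ _) (fun i _ _ => hg i)

/-- Equivalent form of Lemma 7.1: for a real symmetric `m×m` matrix `A` with leading
principal `k×k` submatrix `B`, `‖B − (trB/k)I‖² ≤ ‖A − (trA/m)I‖²`. -/
theorem trace_free_norm_submatrix_le
    (m k : ℕ) (hk : 1 ≤ k) (hkm : k ≤ m)
    (A : Matrix (Fin m) (Fin m) ℝ) (hA : A.IsSymm) :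
    let B : Matrix (Fin k) (Fin k) ℝ := A.submatrix (Fin.castLE hkm) (Fin.castLE hkm)
    ∑ i, ∑ j, ((B - (B.trace / (k : ℝ)) • (1 : Matrix (Fin k) (Fin k) ℝ)) i j) ^ 2 ≤
      ∑ i, ∑ j, ((A - (A.trace / (m : ℝ)) • (1 : Matrix (Fin m) (Fin m) ℝ)) i j) ^ 2 := by
  intro B
  set c := A.trace / m with hc
  set C := A - c • (1 : Matrix (Fin m) (Fin m) ℝ) with hC
  have step1 := min_at_mean hk B c
  have step2 : ∑ i, ∑ j, ((B - c • (1 : Matrix (Fin k) (Fin k) ℝ)) i j) ^ 2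
      = ∑ i : Fin k, ∑ j : Fin k, (C (Fin.castLE hkm i) (Fin.castLE hkm j)) ^ 2 := by
    apply Finset.sum_congr rfl
    intro i _
    apply Finset.sum_congr rfl
    intro j _
    simp only [Matrix.sub_apply, Matrix.smul_apply, Matrix.one_apply, hC, B,
      Matrix.submatrix_apply, smul_eq_mul]
    congr 2
    simp [Fin.castLE_inj]
  have step3 : ∑ i : Fin k, ∑ j : Fin k, (C (Fin.castLE hkm i) (Fin.castLE hkm j)) ^ 2
      ≤ ∑ i : Fin m, ∑ j : Fin m, (C i j) ^ 2 := by
    calc ∑ i : Fin k, ∑ j : Fin k, (C (Fin.castLE hkm i) (Fin.castLE hkm j)) ^ 2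
        ≤ ∑ i : Fin k, ∑ j : Fin m, (C (Fin.castLE hkm i) j) ^ 2 := by
          apply Finset.sum_le_sum
          intro i _
          exact sum_castLE_le hkm _ (fun j => sq_nonneg _)
      _ ≤ ∑ i : Fin m, ∑ j : Fin m, (C i j) ^ 2 :=
          sum_castLE_le hkm _ (fun i => Finset.sum_nonneg fun j _ => sq_nonneg _)
  calc ∑ i, ∑ j, ((B - (B.trace / (k : ℝ)) • (1 : Matrix (Fin k) (Fin k) ℝ)) i j) ^ 2
      ≤ ∑ i, ∑ j, ((B - c • (1 : Matrix (Fin k) (Fin k) ℝ)) i j) ^ 2 := step1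
    _ = _ := step2
    _ ≤ _ := step3
end
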